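/- Multilinearity sum identity: for m ∈ {0,1} and n ≥ 1, Σ_{j=m}^{n-1+m} det(A_m,…,A_{j-1}, B_j, A_{j+1},…,A_{n-1+m}) = (2n−1+m) c₀ H^m_n, where A_j is the column (c_j, c_{j+1}, …, c_{j+n-1})ᵀ and B_j is the column whose i-th entry is Σ_{k=0}^{j+i} c_k c_{j+i−k} (Cauchy-product convolution column). -/

import Mathlib

/-!
Replacing the `p`-th column of `H` by the `p`-th column of `B` and summing over `p` gives
`trace (adjugate H * B)` (Cramer's rule). Sorting the terms `c_k c_{N-k}` of the Cauchy square
according to whether `k ≤ p`, `p < k ≤ p + m` or `p + m < k` splits the convolution matrix as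
`B = H U + R + L H`, with `U` upper triangular Toeplitz (trace `n c₀`) and `L` lower triangular
with diagonal `(0, c₀, …, c₀)` (trace `(n - 1) c₀`); the two products contribute
`det H · trace U` and `det H · trace L`. For `m = 0` the remainder `R` vanishes; for `m = 1` it
is the rank-one matrix `(c_{p+1} c_i)`, whose contribution is `c₀ H¹_n` because bordering `H¹_n`
by the row `(c_0, …, c_n)` and the column `(c_0, …, c_{n-1})` gives a matrix with two equal rows.
-/

/-- Hankel determinant `H^m_n = det(c_{i+j+m})`. -/
noncomputable def Hk (c : ℕ → ℝ) (m n : ℕ) : ℝ :=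
  (Matrix.of fun i j : Fin n => c (i.val + j.val + m)).det

/-- `G^m_n`: the Hankel determinant `H^m_n` with its last row
`(c_{m+n-1},…,c_{m+2n-2})` replaced by `(c_{m+n},…,c_{m+2n-1})`;
by convention `G^m_0 = 0`. -/
noncomputable def Gk (c : ℕ → ℝ) (m n : ℕ) : ℝ :=
  if n = 0 then 0 else
  (Matrix.of fun i j : Fin n =>
    if i.val = n - 1 then c (m + n + j.val) else c (i.val + j.val + m)).det

/-- `E^m_n`: determinant of the `n×n` matrix with rows
`(c_{m+k},…,c_{m+k+n-2}, c_{m+k+n+1})`, i.e. the last column advanced by 2. -/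
noncomputable def Ek (c : ℕ → ℝ) (m n : ℕ) : ℝ :=
  (Matrix.of fun i j : Fin n =>
    if j.val = n - 1 then c (m + i.val + n + 1) else c (m + i.val + j.val)).det

/-- `F^m_n`: determinant of the `n×n` matrix with rows
`(c_{m+k},…,c_{m+k+n-3}, c_{m+k+n-1}, c_{m+k+n})`, i.e. column `n−2` skipped;
by convention `F^m_1 = 0`. -/
noncomputable def Fk (c : ℕ → ℝ) (m n : ℕ) : ℝ :=
  if n = 1 then 0 else
  (Matrix.of fun i j : Fin n =>
    if n - 2 ≤ j.val then c (m + i.val + j.val + 1) else c (m + i.val + j.val)).det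

/-- `S^m_n`: determinant of `(c_{m+σ(i)+σ(j)})` where `σ(i) = i` for `i ≤ n−2`
and `σ(n−1) = n`. -/
noncomputable def Sk (c : ℕ → ℝ) (m n : ℕ) : ℝ :=
  (Matrix.of fun i j : Fin n =>
    c (m + (if i.val = n - 1 then n else i.val) +
        (if j.val = n - 1 then n else j.val))).det

open Finset Matrix

theorem Fin.sum_ite_val_le {M : Type*} [AddCommMonoid M] {n p : ℕ} (hp : p < n) (f : ℕ → M) :
    ∑ x : Fin n, (if (x : ℕ) ≤ p then f x else 0) = ∑ k ∈ range (p + 1), f k := by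
  rw [Fin.sum_univ_eq_sum_range (fun k => if k ≤ p then f k else 0), ← sum_filter]
  congr 1
  ext k
  simp only [mem_filter, mem_range]
  omega

namespace Matrix

variable {R : Type*} [CommRing R] {ι : Type*} [Fintype ι] [DecidableEq ι]

theorem sum_det_updateCol_eq_trace_adjugate_mul (A B : Matrix ι ι R) :
    ∑ p, (A.updateCol p (Bᵀ p)).det = trace (adjugate A * B) := by
  simp_rw [← cramer_apply, cramer_eq_adjugate_mulVec]
  simp [trace, mul_apply, mulVec, dotProduct]

theorem trace_adjugate_mul_self_mul (A U : Matrix ι ι R) :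
    trace (adjugate A * (A * U)) = A.det * trace U := by
  rw [← Matrix.mul_assoc, adjugate_mul, smul_mul, Matrix.one_mul, trace_smul, smul_eq_mul]

theorem trace_adjugate_mul_mul_self (A L : Matrix ι ι R) :
    trace (adjugate A * (L * A)) = A.det * trace L := by
  rw [trace_mul_comm, Matrix.mul_assoc, mul_adjugate, Matrix.mul_smul, Matrix.mul_one, trace_smul,
    smul_eq_mul]

/- Expand along the first row, then each minor other than the corner one along its first
column: the resulting cofactors of `M.submatrix succ succ` are entries of its adjugate. -/
theorem det_succ_eq_sub_dotProduct_adjugate_mulVec {n : ℕ}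
    (M : Matrix (Fin (n + 1)) (Fin (n + 1)) R) :
    M.det = M 0 0 * (M.submatrix Fin.succ Fin.succ).det -
      (fun l => M 0 l.succ) ⬝ᵥ
        (adjugate (M.submatrix Fin.succ Fin.succ) *ᵥ fun j => M j.succ 0) := by
  cases n with
  | zero => simp [det_unique]
  | succ n =>
    have minor (l : Fin (n + 1)) : (M.submatrix Fin.succ l.succ.succAbove).det =
        (-1) ^ (l : ℕ) * (adjugate (M.submatrix Fin.succ Fin.succ) *ᵥ fun j => M j.succ 0) l := by
      rw [det_succ_column_zero, mulVec, dotProduct, Finset.mul_sum]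
      refine Finset.sum_congr rfl fun j _ => ?_
      rw [adjugate_fin_succ_eq_det_submatrix, submatrix_submatrix, submatrix_submatrix]
      simp only [submatrix_apply, Fin.succ_succAbove_zero, Function.comp_def,
        Fin.succ_succAbove_succ]
      rw [pow_add]
      ring_nf
      simp
    rw [det_succ_row_zero, Fin.sum_univ_succ]
    simp only [minor, Fin.val_succ, Fin.val_zero, pow_zero, one_mul, Fin.succAbove_zero,
      dotProduct, sub_eq_add_neg, ← sum_neg_distrib]
    congr 1
    refine Finset.sum_congr rfl fun l _ => ?_
    ring_nf
    simp

end Matrix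

section Hankel

variable {R : Type*} [CommRing R] (c : ℕ → R)

def cauchySquare (N : ℕ) : R := ∑ k ∈ range (N + 1), c k * c (N - k)

def hankel (m n : ℕ) : Matrix (Fin n) (Fin n) R := of fun i j => c (i + j + m)

def convMatrix (m n : ℕ) : Matrix (Fin n) (Fin n) R := of fun i p => cauchySquare c (m + p + i)

def upperToeplitz (n : ℕ) : Matrix (Fin n) (Fin n) R :=
  of fun k j => if (k : ℕ) ≤ j then c (j - k) else 0

def lowerToeplitzTail (n : ℕ) : Matrix (Fin n) (Fin n) R :=
  of fun i s => if (s : ℕ) ≤ i ∧ 0 < (s : ℕ) then c (i - s) else 0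

def convRemainder (m n : ℕ) : Matrix (Fin n) (Fin n) R :=
  of fun i p => ∑ t ∈ range m, c (p + 1 + t) * c (m + i - 1 - t)

theorem cauchySquare_add_add (m p i : ℕ) :
    cauchySquare c (m + p + i) =
      ∑ k ∈ range (p + 1), c (m + k + i) * c (p - k) +
        ∑ t ∈ range m, c (p + 1 + t) * c (m + i - 1 - t) +
        ∑ s ∈ range i, c (i - 1 - s) * c (m + p + 1 + s) := by
  rw [cauchySquare, show m + p + i + 1 = p + 1 + m + i by omega, sum_range_add, sum_range_add,
    ← sum_range_reflect]
  congr 1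
  congr 1
  all_goals refine sum_congr rfl fun k hk => ?_
  all_goals rw [mem_range] at hk
  · rw [mul_comm]; congr 2; omega
  · congr 2; omega
  · rw [mul_comm]; congr 2 <;> omega

theorem hankel_mul_upperToeplitz_apply (m n : ℕ) (i p : Fin n) :
    (hankel c m n * upperToeplitz c n) i p = ∑ k ∈ range (p + 1), c (m + k + i) * c (p - k) := by
  simp only [mul_apply, hankel, upperToeplitz, of_apply, mul_ite, mul_zero]
  rw [Fin.sum_ite_val_le p.isLt (fun k => c (i + k + m) * c (p - k))]
  refine sum_congr rfl fun k _ => ?_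
  rw [show i + k + m = m + k + (i : ℕ) by omega]

theorem lowerToeplitzTail_mul_hankel_apply (m n : ℕ) (i p : Fin n) :
    (lowerToeplitzTail c n * hankel c m n) i p =
      ∑ s ∈ range i, c (i - 1 - s) * c (m + p + 1 + s) := by
  simp only [mul_apply, lowerToeplitzTail, hankel, of_apply, ite_mul, zero_mul, ite_and]
  rw [Fin.sum_ite_val_le i.isLt (fun s => if 0 < s then c (i - s) * c (s + p + m) else 0),
    sum_range_succ']
  simp only [lt_irrefl, if_false, add_zero, Nat.succ_pos, if_true]
  refine sum_congr rfl fun s _ => ?_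
  rw [Nat.sub_add_eq, show s + 1 + p + m = m + p + 1 + s by omega, Nat.sub_right_comm]

theorem convMatrix_eq (m n : ℕ) :
    convMatrix c m n = hankel c m n * upperToeplitz c n + convRemainder c m n +
      lowerToeplitzTail c n * hankel c m n := by
  ext i p
  rw [Matrix.add_apply, Matrix.add_apply, hankel_mul_upperToeplitz_apply,
    lowerToeplitzTail_mul_hankel_apply, convMatrix, of_apply, cauchySquare_add_add,
    convRemainder, of_apply]

theorem trace_upperToeplitz (n : ℕ) : trace (upperToeplitz c n) = n * c 0 := by
  simp [trace, upperToeplitz]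

theorem trace_lowerToeplitzTail (n : ℕ) : trace (lowerToeplitzTail c (n + 1)) = n * c 0 := by
  simp [trace, lowerToeplitzTail, Fin.sum_univ_succ]

theorem convRemainder_zero (n : ℕ) : convRemainder c 0 n = 0 := by
  ext i p
  simp [convRemainder]

theorem convRemainder_one (n : ℕ) :
    convRemainder c 1 n = vecMulVec (fun i : Fin n => c i) (fun p : Fin n => c (p + 1)) := by
  ext i p
  simp [convRemainder, vecMulVec_apply, mul_comm]

theorem dotProduct_adjugate_hankel_one_mulVec (n : ℕ) :
    (fun p : Fin (n + 1) => c (p + 1)) ⬝ᵥ (adjugate (hankel c 1 (n + 1)) *ᵥ fun i => c i) =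
      c 0 * (hankel c 1 (n + 1)).det := by
  set M : Matrix (Fin (n + 2)) (Fin (n + 2)) R := of (vecCons (fun j => c j) fun i j => c (i + j))
  have hM : M.det = 0 := det_zero_of_row_eq (i := 0) (j := 1) (by simp) (by ext j; simp [M])
  have hcorner : M.submatrix Fin.succ Fin.succ = hankel c 1 (n + 1) := by
    ext i j
    simp [M, hankel, ← add_assoc]
  have hborder := det_succ_eq_sub_dotProduct_adjugate_mulVec M
  rw [hM, hcorner] at hborder
  simp [M] at hborder
  linear_combination hborder

end Hankel

theorem Hk_eq_det_hankel (c : ℕ → ℝ) (m n : ℕ) : Hk c m n = (hankel c m n).det := rfl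

/-- Multilinearity sum identity:
`Σ_{j=m}^{n-1+m} det(A_m,…,B_j,…,A_{n-1+m}) = (2n−1+m) c₀ H^m_n`, where `A_j` is
the Hankel column `(c_{j+i})ᵢ` and `B_j` the convolution column
`(Σ_{k=0}^{j+i} c_k c_{j+i−k})ᵢ`. -/
theorem sum_det_B (c : ℕ → ℝ) (m : ℕ) (hm : m = 0 ∨ m = 1) (n : ℕ) (hn : 1 ≤ n) :
    (∑ p : Fin n,
      (Matrix.of fun i q : Fin n =>
        if q = p then ∑ k ∈ Finset.range (m + p.val + i.val + 1),
            c k * c (m + p.val + i.val - k)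
        else c (m + q.val + i.val)).det) =
      ((2 * n - 1 + m : ℕ) : ℝ) * c 0 * Hk c m n := by
  obtain ⟨n, rfl⟩ : ∃ k, n = k + 1 := ⟨n - 1, by omega⟩
  have hcols (p : Fin (n + 1)) : (of fun i q : Fin (n + 1) =>
        if q = p then ∑ k ∈ range (m + p.val + i.val + 1), c k * c (m + p.val + i.val - k)
        else c (m + q.val + i.val)) =
      (hankel c m (n + 1)).updateCol p ((convMatrix c m (n + 1))ᵀ p) := by
    ext i q
    rw [of_apply, updateCol_apply]
    split_ifs
    · rfl
    · simp only [hankel, of_apply]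
      ring_nf
  simp_rw [hcols]
  rw [sum_det_updateCol_eq_trace_adjugate_mul, convMatrix_eq, Matrix.mul_add, Matrix.mul_add,
    trace_add, trace_add, trace_adjugate_mul_self_mul, trace_adjugate_mul_mul_self,
    trace_upperToeplitz, trace_lowerToeplitzTail, Hk_eq_det_hankel]
  rcases hm with rfl | rfl
  · rw [convRemainder_zero, Matrix.mul_zero, trace_zero,
      show 2 * (n + 1) - 1 + 0 = 2 * n + 1 by omega]
    push_cast
    ring
  · rw [convRemainder_one, mul_vecMulVec, trace_vecMulVec, dotProduct_comm,
      dotProduct_adjugate_hankel_one_mulVec, show 2 * (n + 1) - 1 + 1 = 2 * n + 2 by omega]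
    push_cast
    ring
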